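/- For every edit script δ̄ with δ̄(x̄) = ȳ between trees x̄ and ȳ over 𝒳, there exists an inverse edit script δ̄⁻¹ of the same length with δ̄⁻¹(ȳ) = x̄; moreover, if the cost function c is symmetric, then c(δ̄⁻¹, ȳ) = c(δ̄, x̄). -/

import Mathlib

namespace TED

/-- A tree over an alphabet `α`: a label together with a (possibly empty) list of children. -/
inductive PTree (α : Type) where
  | node : α → List (PTree α) → PTree α

/-- A forest over `α` is a finite list of trees; `[]` is the empty forest `ε`. -/
abbrev Forest (α : Type) := List (PTree α)

namespace PTree

/-- The label of (the root of) a tree. -/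
def label {α : Type} : PTree α → α
  | node a _ => a

/-- The children of (the root of) a tree. -/
def children {α : Type} : PTree α → List (PTree α)
  | node _ cs => cs

mutual
  /-- The number of nodes of a tree. -/
  def size {α : Type} : PTree α → ℕ
    | node _ cs => 1 + sizeL cs
  /-- The number of nodes of a forest. -/
  def sizeL {α : Type} : List (PTree α) → ℕ
    | [] => 0
    | t :: ts => size t + sizeL ts
end

mutual
  /-- The pre-order list of all subtrees of a tree. -/
  def subtreesT {α : Type} : PTree α → List (PTree α)
    | node a cs => node a cs :: subtreesL cs
  /-- The pre-order list of all subtrees of a forest. -/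
  def subtreesL {α : Type} : List (PTree α) → List (PTree α)
    | [] => []
    | t :: ts => subtreesT t ++ subtreesL ts
end

end PTree

open PTree

/-- The pre-order `π(X)` of a forest: the list of all its subtrees. -/
def preorder {α : Type} (F : Forest α) : List (PTree α) := PTree.subtreesL F

/-- The size `|X|` of a forest: the length of its pre-order. -/
def fsize {α : Type} (F : Forest α) : ℕ := (preorder F).length

/-- The `i`-th subtree `x̄_i` (1-indexed pre-order) of a forest, if it exists. -/
def treeAt {α : Type} (F : Forest α) (i : ℕ) : Option (PTree α) := (preorder F)[i - 1]?

/-- The label `x_i` of the `i`-th subtree, as an element of `𝒳 ∪ {−}`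
(`none` plays the role of the gap symbol `−`). -/
def labelAt {α : Type} (F : Forest α) (i : ℕ) : Option α := (treeAt F i).map PTree.label

/-- The number of nodes of the `i`-th subtree `x̄_i`. -/
def sizeAt {α : Type} (F : Forest α) (i : ℕ) : ℕ := ((treeAt F i).map PTree.size).getD 0

/-- A cost function over `α`: a real-valued function on `(𝒳 ∪ {−}) × (𝒳 ∪ {−})`,
where the gap symbol `−` is modelled by `none`. -/
abbrev Cost (α : Type) := Option α → Option α → ℝ

/-- `c` is non-negative. -/
def Nonneg {α : Type} (c : Cost α) : Prop := ∀ x y, 0 ≤ c x y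
/-- `c` is self-equal. -/
def SelfEq {α : Type} (c : Cost α) : Prop := ∀ x, c x x = 0
/-- `c` is discernible. -/
def Discernible {α : Type} (c : Cost α) : Prop := ∀ x y, x ≠ y → 0 < c x y
/-- `c` is symmetric. -/
def Symm {α : Type} (c : Cost α) : Prop := ∀ x y, c x y = c y x
/-- `c` conforms to the triangular inequality. -/
def Triangle {α : Type} (c : Cost α) : Prop := ∀ x y z, c x z ≤ c x y + c y z

/-- Deletion of the first root: its children are spliced into its place. -/
def delRoot {α : Type} : Forest α → Forest α
  | [] => []
  | PTree.node _ cs :: ts => cs ++ ts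

/-- Replacement of the label of the first root by `y`. -/
def repRoot {α : Type} (y : α) : Forest α → Forest α
  | [] => []
  | PTree.node _ cs :: ts => PTree.node y cs :: ts

/-- Insertion of a new root labeled `y` at root level, adopting the trees
`l` to `r-1` of the forest as its children. -/
def insRoot {α : Type} (y : α) (l r : ℕ) (F : Forest α) : Forest α :=
  if r > F.length + 1 ∨ l > r ∨ l < 1 then F
  else if l = r then F.take (l - 1) ++ [PTree.node y []] ++ F.drop (l - 1)
  else F.take (l - 1) ++ [PTree.node y ((F.drop (l - 1)).take (r - l))] ++ F.drop (r - 1)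

/-- `del_i`: deletion of the node with pre-order index `i`. -/
def applyDel {α : Type} : ℕ → Forest α → Forest α
  | _, [] => []
  | i, PTree.node a cs :: ts =>
    if i < 1 then PTree.node a cs :: ts
    else if i = 1 then delRoot (PTree.node a cs :: ts)
    else if i ≤ size (PTree.node a cs) then PTree.node a (applyDel (i - 1) cs) :: ts
    else PTree.node a cs :: applyDel (i - size (PTree.node a cs)) ts
  termination_by _ F => sizeOf F

/-- `rep_{i,y}`: replacement of the label of the node with pre-order index `i` by `y`. -/
def applyRep {α : Type} (y : α) : ℕ → Forest α → Forest α
  | _, [] => []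
  | i, PTree.node a cs :: ts =>
    if i < 1 then PTree.node a cs :: ts
    else if i = 1 then repRoot y (PTree.node a cs :: ts)
    else if i ≤ size (PTree.node a cs) then PTree.node a (applyRep y (i - 1) cs) :: ts
    else PTree.node a cs :: applyRep y (i - size (PTree.node a cs)) ts
  termination_by _ F => sizeOf F

/-- `ins_{i,y,l,r}`: insertion of a node labeled `y` as a child of the node with
pre-order index `i` (at root level if `i = 0`), adopting that node's children
`l` through `r-1` as its children. -/
def applyIns {α : Type} (y : α) (l r : ℕ) : ℕ → Forest α → Forest α
  | 0, F => insRoot y l r F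
  | _ + 1, [] => []
  | i + 1, PTree.node a cs :: ts =>
    if i + 1 ≤ size (PTree.node a cs) then PTree.node a (applyIns y l r i cs) :: ts
    else PTree.node a cs :: applyIns y l r (i + 1 - size (PTree.node a cs)) ts
  termination_by _ F => sizeOf F

/-- The standard edits: deletions `del_i`, replacements `rep_{i,y}` and
insertions `ins_{i,y,l,r}`. -/
inductive Edit (α : Type) where
  | del (i : ℕ)
  | rep (i : ℕ) (y : α)
  | ins (i : ℕ) (y : α) (l r : ℕ)

/-- Application of a single edit to a forest. -/
def Edit.apply {α : Type} : Edit α → Forest α → Forest α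
  | .del i, F => applyDel i F
  | .rep i y, F => applyRep y i F
  | .ins i y l r, F => applyIns y l r i F

/-- Application of an edit script `δ̄ = δ₁,…,δ_T` to a forest (left to right). -/
def applyScript {α : Type} (δ : List (Edit α)) (F : Forest α) : Forest α :=
  δ.foldl (fun F e => e.apply F) F

open Classical in
/-- The cost of a single edit with respect to the forest it is applied to:
`0` if the edit leaves the forest unchanged, and otherwise `c(x_i, y)` for a
replacement, `c(x_i, −)` for a deletion and `c(−, y)` for an insertion. -/
noncomputable def editCost {α : Type} (c : Cost α) (e : Edit α) (F : Forest α) : ℝ :=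
  if e.apply F = F then 0
  else
    match e with
    | .del i => c (labelAt F i) none
    | .rep i y => c (labelAt F i) (some y)
    | .ins _ y _ _ => c none (some y)

/-- The cost `c(δ̄, X)` of an edit script: the sum of the costs of its edits,
each evaluated on the forest to which it is applied. -/
noncomputable def scriptCost {α : Type} (c : Cost α) : List (Edit α) → Forest α → ℝ
  | [], _ => 0
  | e :: es, F => editCost c e F + scriptCost c es (e.apply F)

/-!
Write a forest as `K[G]`: a context `K` (a forest with a hole for a run of consecutive
siblings) filled with the forest `G`. An edit that changes the forest rewrites a single spot:
a deletion turns `K[a(G)]` into `K[G]`, an insertion turns `K[G]` into `K[y(G)]`, and a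
replacement turns `K[a(G)]` into `K[y(G)]`. Each of these is undone by an edit of the opposite
kind at the same spot whose cost is `c` at the swapped pair of labels; an edit that changes
nothing is its own inverse, at cost `0`. Inverting the edits one by one in reverse order inverts
the script.
-/

namespace PTree

variable {α : Type}

theorem size_node (a : α) (cs : List (PTree α)) : size (PTree.node a cs) = 1 + sizeL cs := by
  rw [size]

theorem sizeL_nil : sizeL ([] : List (PTree α)) = 0 := by
  rw [sizeL]

theorem sizeL_cons (t : PTree α) (ts : List (PTree α)) :
    sizeL (t :: ts) = size t + sizeL ts := by
  rw [sizeL]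

theorem one_le_size (t : PTree α) : 1 ≤ size t := by
  cases t
  rw [size_node]
  omega

theorem sizeL_append (A B : List (PTree α)) : sizeL (A ++ B) = sizeL A + sizeL B := by
  induction A with
  | nil => rw [List.nil_append, sizeL_nil, Nat.zero_add]
  | cons t ts ih => rw [List.cons_append, sizeL_cons, sizeL_cons, ih, Nat.add_assoc]

mutual
  theorem length_subtreesT (t : PTree α) : (subtreesT t).length = size t := by
    match t with
    | .node a cs => rw [subtreesT, size, List.length_cons, length_subtreesL cs, Nat.add_comm]
  theorem length_subtreesL (F : List (PTree α)) : (subtreesL F).length = sizeL F := by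
    match F with
    | [] => rw [subtreesL, sizeL, List.length_nil]
    | t :: ts =>
      rw [subtreesL, sizeL, List.length_append, length_subtreesT t, length_subtreesL ts]
end

theorem subtreesL_append (A B : List (PTree α)) :
    subtreesL (A ++ B) = subtreesL A ++ subtreesL B := by
  induction A with
  | nil => rw [subtreesL, List.nil_append, List.nil_append]
  | cons t ts ih => rw [List.cons_append, subtreesL, subtreesL, ih, List.append_assoc]

theorem subtreesL_node_cons (a : α) (cs ts : List (PTree α)) :
    subtreesL (PTree.node a cs :: ts) = PTree.node a cs :: (subtreesL cs ++ subtreesL ts) := by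
  rw [subtreesL, subtreesT, List.cons_append]

end PTree

/-- A forest with a hole for a list of consecutive siblings: `root P S` is `P ++ □ ++ S`, and
`child P a K S` is `P ++ a(K) :: S`. -/
inductive Context (α : Type) where
  | root (P S : Forest α)
  | child (P : Forest α) (a : α) (K : Context α) (S : Forest α)

namespace Context

variable {α : Type}

def fill : Context α → Forest α → Forest α
  | root P S, G => P ++ G ++ S
  | child P a K S, G => P ++ PTree.node a (K.fill G) :: S

/-- The number of nodes preceding the hole in pre-order. -/
def offset : Context α → ℕ
  | root P _ => sizeL P
  | child P _ K _ => sizeL P + 1 + K.offset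

/-- The pre-order index of the parent of the hole, `0` if the hole is at root level. -/
def parent : Context α → ℕ
  | root _ _ => 0
  | child P _ K _ => sizeL P + 1 + K.parent

/-- The number of siblings to the left of the hole. -/
def index : Context α → ℕ
  | root P _ => P.length
  | child _ _ K _ => K.index

def cons (u : PTree α) : Context α → Context α
  | root P S => root (u :: P) S
  | child P a K S => child (u :: P) a K S

theorem fill_cons (u : PTree α) (K : Context α) (G : Forest α) :
    (K.cons u).fill G = u :: K.fill G := by
  cases K <;> rfl

theorem offset_cons (u : PTree α) (K : Context α) : (K.cons u).offset = size u + K.offset := by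
  cases K <;> simp only [cons, offset, sizeL_cons, Nat.add_assoc]

theorem parent_le_offset (K : Context α) : K.parent ≤ K.offset := by
  induction K with
  | root => exact Nat.zero_le _
  | child P a K S ih => simp only [parent, offset]; omega

theorem offset_add_sizeL_le (K : Context α) (G : Forest α) :
    K.offset + sizeL G ≤ sizeL (K.fill G) := by
  induction K with
  | root P S => simp only [offset, fill, sizeL_append]; omega
  | child P a K S ih => simp only [offset, fill, sizeL_append, sizeL_cons, size_node]; omega

theorem exists_subtreesL_fill (K : Context α) (G : Forest α) :
    ∃ A B, subtreesL (K.fill G) = A ++ subtreesL G ++ B ∧ A.length = K.offset := by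
  induction K with
  | root P S =>
    exact ⟨subtreesL P, subtreesL S, by rw [fill, subtreesL_append, subtreesL_append],
      length_subtreesL P⟩
  | child P a K S ih =>
    obtain ⟨A, B, hsub, hlen⟩ := ih
    refine ⟨subtreesL P ++ PTree.node a (K.fill G) :: A, B ++ subtreesL S, ?_, ?_⟩
    · rw [fill, subtreesL_append, subtreesL_node_cons, hsub]
      simp only [List.append_assoc, List.cons_append]
    · simp only [List.length_append, List.length_cons, length_subtreesL, hlen, offset]
      omega

theorem treeAt_fill (K : Context α) (t : PTree α) (G : Forest α) :
    treeAt (K.fill (t :: G)) (K.offset + 1) = some t := by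
  obtain ⟨A, B, hsub, hlen⟩ := K.exists_subtreesL_fill (t :: G)
  cases t
  rw [treeAt, preorder, hsub, Nat.add_sub_cancel, ← hlen, subtreesL_node_cons]
  simp

theorem labelAt_fill (K : Context α) (t : PTree α) (G : Forest α) :
    labelAt (K.fill (t :: G)) (K.offset + 1) = some t.label := by
  rw [labelAt, treeAt_fill, Option.map_some]

end Context

section

variable {α : Type}

theorem applyDel_append (P F : Forest α) {i : ℕ} (hi : 1 ≤ i) :
    applyDel (sizeL P + i) (P ++ F) = P ++ applyDel i F := by
  induction P with
  | nil => rw [sizeL_nil, Nat.zero_add, List.nil_append, List.nil_append]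
  | cons t P ih =>
    obtain ⟨a, cs⟩ := t
    have := one_le_size (PTree.node a cs)
    rw [List.cons_append, applyDel, sizeL_cons, if_neg (by omega), if_neg (by omega),
      if_neg (by omega), show size (PTree.node a cs) + sizeL P + i - size (PTree.node a cs)
        = sizeL P + i by omega, ih, List.cons_append]

theorem applyDel_node_cons_succ (a : α) (cs S : Forest α) {i : ℕ} (hi : 1 ≤ i)
    (h : i ≤ sizeL cs) :
    applyDel (i + 1) (PTree.node a cs :: S) = PTree.node a (applyDel i cs) :: S := by
  rw [applyDel, if_neg (by omega), if_neg (by omega), if_pos (by rw [size_node]; omega),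
    Nat.add_sub_cancel]

theorem applyRep_append (y : α) (P F : Forest α) {i : ℕ} (hi : 1 ≤ i) :
    applyRep y (sizeL P + i) (P ++ F) = P ++ applyRep y i F := by
  induction P with
  | nil => rw [sizeL_nil, Nat.zero_add, List.nil_append, List.nil_append]
  | cons t P ih =>
    obtain ⟨a, cs⟩ := t
    have := one_le_size (PTree.node a cs)
    rw [List.cons_append, applyRep, sizeL_cons, if_neg (by omega), if_neg (by omega),
      if_neg (by omega), show size (PTree.node a cs) + sizeL P + i - size (PTree.node a cs)
        = sizeL P + i by omega, ih, List.cons_append]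

theorem applyRep_node_cons_succ (y a : α) (cs S : Forest α) {i : ℕ} (hi : 1 ≤ i)
    (h : i ≤ sizeL cs) :
    applyRep y (i + 1) (PTree.node a cs :: S) = PTree.node a (applyRep y i cs) :: S := by
  rw [applyRep, if_neg (by omega), if_neg (by omega), if_pos (by rw [size_node]; omega),
    Nat.add_sub_cancel]

theorem applyIns_append (y : α) (l r : ℕ) (P F : Forest α) {j : ℕ} (hj : 1 ≤ j) :
    applyIns y l r (sizeL P + j) (P ++ F) = P ++ applyIns y l r j F := by
  induction P with
  | nil => rw [sizeL_nil, Nat.zero_add, List.nil_append, List.nil_append]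
  | cons t P ih =>
    obtain ⟨a, cs⟩ := t
    have := one_le_size (PTree.node a cs)
    rw [List.cons_append, sizeL_cons, show size (PTree.node a cs) + sizeL P + j
        = (size (PTree.node a cs) + sizeL P + j - 1) + 1 by omega, applyIns, if_neg (by omega),
      show size (PTree.node a cs) + sizeL P + j - 1 + 1 - size (PTree.node a cs)
        = sizeL P + j by omega, ih, List.cons_append]

theorem applyIns_node_cons_succ (y : α) (l r : ℕ) (a : α) (cs S : Forest α) {j : ℕ}
    (h : j ≤ sizeL cs) :
    applyIns y l r (j + 1) (PTree.node a cs :: S) = PTree.node a (applyIns y l r j cs) :: S := by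
  rw [applyIns, if_pos (by rw [size_node]; omega)]

theorem insRoot_append (y : α) (P G S : Forest α) :
    insRoot y (P.length + 1) (P.length + G.length + 1) (P ++ G ++ S)
      = P ++ PTree.node y G :: S := by
  have hlen : (P ++ G ++ S).length = P.length + G.length + S.length := by
    simp only [List.length_append]
  rw [insRoot, if_neg (by omega)]
  by_cases hG : G = []
  · subst hG
    simp
  · rw [if_neg (by simpa using hG)]
    simp [List.drop_append]

end

namespace Context

variable {α : Type}

theorem offset_lt_sizeL_fill (K : Context α) (t : PTree α) :
    K.offset < sizeL (K.fill [t]) := by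
  have := K.offset_add_sizeL_le [t]
  rw [sizeL_cons, sizeL_nil] at this
  have := one_le_size t
  omega

theorem applyDel_fill (K : Context α) (a : α) (cs : Forest α) :
    applyDel (K.offset + 1) (K.fill [PTree.node a cs]) = K.fill cs := by
  induction K with
  | root P S =>
    rw [fill, fill, offset, List.append_assoc, applyDel_append _ _ le_rfl, List.singleton_append,
      applyDel, if_neg (by omega), if_pos rfl, delRoot, List.append_assoc]
  | child P b K S ih =>
    have := K.offset_lt_sizeL_fill (PTree.node a cs)
    rw [fill, fill, offset, show sizeL P + 1 + K.offset + 1 = sizeL P + (K.offset + 1 + 1) by omega,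
      applyDel_append _ _ (by omega), applyDel_node_cons_succ _ _ _ (by omega) this, ih]

theorem applyRep_fill (K : Context α) (y a : α) (cs : Forest α) :
    applyRep y (K.offset + 1) (K.fill [PTree.node a cs]) = K.fill [PTree.node y cs] := by
  induction K with
  | root P S =>
    rw [fill, fill, offset, List.append_assoc, applyRep_append _ _ _ le_rfl, List.singleton_append,
      applyRep, if_neg (by omega), if_pos rfl, repRoot, List.append_assoc, List.singleton_append]
  | child P b K S ih =>
    have := K.offset_lt_sizeL_fill (PTree.node a cs)
    rw [fill, fill, offset, show sizeL P + 1 + K.offset + 1 = sizeL P + (K.offset + 1 + 1) by omega,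
      applyRep_append _ _ _ (by omega), applyRep_node_cons_succ _ _ _ _ (by omega) this, ih]

theorem applyIns_fill (K : Context α) (y : α) (G : Forest α) :
    applyIns y (K.index + 1) (K.index + G.length + 1) K.parent (K.fill G)
      = K.fill [PTree.node y G] := by
  induction K with
  | root P S =>
    rw [fill, fill, parent, index, applyIns, insRoot_append, List.append_assoc,
      List.singleton_append]
  | child P b K S ih =>
    have := K.parent_le_offset
    have := K.offset_add_sizeL_le G
    rw [fill, fill, parent, index, show sizeL P + 1 + K.parent = sizeL P + (K.parent + 1) by omega,
      applyIns_append _ _ _ _ _ (by omega), applyIns_node_cons_succ _ _ _ _ _ _ (by omega), ih]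


theorem exists_fill_of_le_sizeL :
    ∀ (F : Forest α) {i : ℕ}, 1 ≤ i → i ≤ sizeL F →
      ∃ (K : Context α) (t : PTree α), K.offset + 1 = i ∧ K.fill [t] = F
  | [], i, _, h => by rw [sizeL_nil] at h; omega
  | .node a cs :: S, i, h₁, h₂ => by
    rw [sizeL_cons, size_node] at h₂
    rcases (show i = 1 ∨ (2 ≤ i ∧ i ≤ 1 + sizeL cs) ∨ 1 + sizeL cs < i by omega)
      with rfl | ⟨hi₁, hi₂⟩ | hi
    · exact ⟨root [] S, .node a cs, by rw [offset, sizeL_nil], rfl⟩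
    · obtain ⟨K, t, hK, rfl⟩ := exists_fill_of_le_sizeL cs (i := i - 1) (by omega) (by omega)
      exact ⟨child [] a K S, t, by rw [offset, sizeL_nil]; omega, rfl⟩
    · obtain ⟨K, t, hK, rfl⟩ :=
        exists_fill_of_le_sizeL S (i := i - (1 + sizeL cs)) (by omega) (by omega)
      exact ⟨K.cons (.node a cs), t, by rw [offset_cons, size_node]; omega, fill_cons ..⟩
termination_by F => sizeOf F

theorem exists_fill_of_applyIns_ne (y : α) (l r : ℕ) :
    ∀ (j : ℕ) (F : Forest α), applyIns y l r j F ≠ F →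
      ∃ (K : Context α) (G : Forest α), K.parent = j ∧ K.index + 1 = l ∧
        K.index + G.length + 1 = r ∧ K.fill G = F
  | 0, F, h => by
    rw [applyIns, insRoot] at h
    by_cases hlr : r > F.length + 1 ∨ l > r ∨ l < 1
    · exact absurd (if_pos hlr) h
    refine ⟨root (F.take (l - 1)) (F.drop (r - 1)), (F.drop (l - 1)).take (r - l), rfl,
      ?_, ?_, ?_⟩
    · simp only [index, List.length_take]; omega
    · simp only [index, List.length_take, List.length_drop]; omega
    · have hdrop : F.drop (r - 1) = (F.drop (l - 1)).drop (r - l) := by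
        rw [List.drop_drop]
        congr 1
        omega
      rw [fill, hdrop, List.append_assoc, List.take_append_drop, List.take_append_drop]
  | _ + 1, [], h => absurd (by rw [applyIns]) h
  | j + 1, .node a cs :: S, h => by
    rw [applyIns] at h
    split_ifs at h with hj
    · obtain ⟨K, G, hK, hl, hr, rfl⟩ :=
        exists_fill_of_applyIns_ne y l r j cs fun e => h (by rw [e])
      exact ⟨child [] a K S, G, by rw [parent, sizeL_nil]; omega, hl, hr, rfl⟩
    · obtain ⟨K, G, hK, hl, hr, rfl⟩ :=
        exists_fill_of_applyIns_ne y l r _ S fun e => h (by rw [e])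
      cases K with
      | root => rw [parent] at hK; omega
      | child P b K S' =>
        rw [parent] at hK
        refine ⟨child (.node a cs :: P) b K S', G, ?_, hl, hr, rfl⟩
        rw [parent, sizeL_cons]
        omega
termination_by _ F => sizeOf F

end Context

section

variable {α : Type}

theorem le_sizeL_of_applyDel_ne :
    ∀ {i : ℕ} {F : Forest α}, applyDel i F ≠ F → 1 ≤ i ∧ i ≤ sizeL F
  | _, [], h => absurd (by rw [applyDel]) h
  | _, .node a cs :: S, h => by
    have := one_le_size (PTree.node a cs)
    rw [applyDel] at h
    rw [sizeL_cons]
    split_ifs at h with h₁ h₂ h₃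
    · exact absurd rfl h
    · omega
    · omega
    · have := le_sizeL_of_applyDel_ne fun e => h (by rw [e])
      omega
termination_by _ F => sizeOf F

theorem le_sizeL_of_applyRep_ne {y : α} :
    ∀ {i : ℕ} {F : Forest α}, applyRep y i F ≠ F → 1 ≤ i ∧ i ≤ sizeL F
  | _, [], h => absurd (by rw [applyRep]) h
  | _, .node a cs :: S, h => by
    have := one_le_size (PTree.node a cs)
    rw [applyRep] at h
    rw [sizeL_cons]
    split_ifs at h with h₁ h₂ h₃
    · exact absurd rfl h
    · omega
    · omega
    · have := le_sizeL_of_applyRep_ne fun e => h (by rw [e])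
      omega
termination_by _ F => sizeOf F

theorem editCost_of_apply_ne (c : Cost α) {e : Edit α} {F : Forest α} (h : e.apply F ≠ F) :
    editCost c e F = match e with
      | .del i => c (labelAt F i) none
      | .rep i y => c (labelAt F i) (some y)
      | .ins _ y _ _ => c none (some y) := by
  unfold editCost
  rw [if_neg h]
  cases e <;> rfl

def Edit.Undoes (e' e : Edit α) (F : Forest α) : Prop :=
  e'.apply (e.apply F) = F ∧
    ∀ c : Cost α, Symm c → editCost c e' (e.apply F) = editCost c e F

theorem Edit.undoes_self_of_apply_eq {e : Edit α} {F : Forest α} (h : e.apply F = F) :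
    e.Undoes e F :=
  ⟨by rw [h, h], fun _ _ => by rw [h]⟩

theorem exists_undoes_del {i : ℕ} {F : Forest α} (hF : (Edit.del i).apply F ≠ F) :
    ∃ e : Edit α, e.Undoes (.del i) F := by
  obtain ⟨hi₁, hi₂⟩ := le_sizeL_of_applyDel_ne hF
  obtain ⟨K, ⟨a, cs⟩, rfl, rfl⟩ := Context.exists_fill_of_le_sizeL F hi₁ hi₂
  have hdel : (Edit.del (K.offset + 1)).apply (K.fill [.node a cs]) = K.fill cs :=
    K.applyDel_fill a cs
  have hins : (Edit.ins K.parent a (K.index + 1) (K.index + cs.length + 1)).apply (K.fill cs)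
      = K.fill [.node a cs] := K.applyIns_fill a cs
  refine ⟨_, hdel ▸ hins, fun c hc => ?_⟩
  rw [editCost_of_apply_ne c hF, hdel, editCost_of_apply_ne c (hins.trans_ne (hdel ▸ hF.symm))]
  dsimp only
  rw [K.labelAt_fill]
  exact hc _ _

theorem exists_undoes_rep {i : ℕ} {y : α} {F : Forest α} (hF : (Edit.rep i y).apply F ≠ F) :
    ∃ e : Edit α, e.Undoes (.rep i y) F := by
  obtain ⟨hi₁, hi₂⟩ := le_sizeL_of_applyRep_ne hF
  obtain ⟨K, ⟨a, cs⟩, rfl, rfl⟩ := Context.exists_fill_of_le_sizeL F hi₁ hi₂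
  have hrep : (Edit.rep (K.offset + 1) y).apply (K.fill [.node a cs]) = K.fill [.node y cs] :=
    K.applyRep_fill y a cs
  have hrep' : (Edit.rep (K.offset + 1) a).apply (K.fill [.node y cs]) = K.fill [.node a cs] :=
    K.applyRep_fill a y cs
  refine ⟨_, hrep ▸ hrep', fun c hc => ?_⟩
  rw [editCost_of_apply_ne c hF, hrep,
    editCost_of_apply_ne c (hrep'.trans_ne (hrep ▸ hF.symm))]
  dsimp only
  rw [K.labelAt_fill, K.labelAt_fill]
  exact hc _ _

theorem exists_undoes_ins {j l r : ℕ} {y : α} {F : Forest α}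
    (hF : (Edit.ins j y l r).apply F ≠ F) :
    ∃ e : Edit α, e.Undoes (.ins j y l r) F := by
  obtain ⟨K, G, rfl, rfl, rfl, rfl⟩ := Context.exists_fill_of_applyIns_ne y l r j F hF
  have hins : (Edit.ins K.parent y (K.index + 1) (K.index + G.length + 1)).apply (K.fill G)
      = K.fill [.node y G] := K.applyIns_fill y G
  have hdel : (Edit.del (K.offset + 1)).apply (K.fill [.node y G]) = K.fill G :=
    K.applyDel_fill y G
  refine ⟨_, hins ▸ hdel, fun c hc => ?_⟩
  rw [editCost_of_apply_ne c hF, hins, editCost_of_apply_ne c (hdel.trans_ne (hins ▸ hF.symm))]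
  dsimp only
  rw [K.labelAt_fill]
  exact hc _ _

theorem Edit.exists_undoes (e : Edit α) (F : Forest α) : ∃ e' : Edit α, e'.Undoes e F := by
  by_cases hF : e.apply F = F
  · exact ⟨e, Edit.undoes_self_of_apply_eq hF⟩
  cases e with
  | del i => exact exists_undoes_del hF
  | rep i y => exact exists_undoes_rep hF
  | ins j y l r => exact exists_undoes_ins hF

theorem applyScript_cons (e : Edit α) (δ : List (Edit α)) (F : Forest α) :
    applyScript (e :: δ) F = applyScript δ (e.apply F) :=
  rfl

theorem applyScript_append (δ₁ δ₂ : List (Edit α)) (F : Forest α) :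
    applyScript (δ₁ ++ δ₂) F = applyScript δ₂ (applyScript δ₁ F) :=
  List.foldl_append

theorem scriptCost_append (c : Cost α) (δ₁ δ₂ : List (Edit α)) (F : Forest α) :
    scriptCost c (δ₁ ++ δ₂) F
      = scriptCost c δ₁ F + scriptCost c δ₂ (applyScript δ₁ F) := by
  induction δ₁ generalizing F with
  | nil => rw [List.nil_append, scriptCost, zero_add]; rfl
  | cons e δ₁ ih =>
    rw [List.cons_append, scriptCost, scriptCost, ih, applyScript_cons, add_assoc]

theorem exists_inverse_script_forest (δ : List (Edit α)) (F : Forest α) :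
    ∃ δinv : List (Edit α), δinv.length = δ.length ∧
      applyScript δinv (applyScript δ F) = F ∧
      ∀ c : Cost α, Symm c → scriptCost c δinv (applyScript δ F) = scriptCost c δ F := by
  induction δ generalizing F with
  | nil => exact ⟨[], rfl, rfl, fun _ _ => rfl⟩
  | cons e δ ih =>
    obtain ⟨δinv, hlen, happly, hcost⟩ := ih (e.apply F)
    obtain ⟨e', happly', hcost'⟩ := e.exists_undoes F
    refine ⟨δinv ++ [e'], by simp [hlen], ?_, fun c hc => ?_⟩
    · rw [applyScript_cons, applyScript_append, happly]
      exact happly'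
    · rw [applyScript_cons, scriptCost_append, hcost c hc, happly, scriptCost, scriptCost,
        scriptCost, hcost' c hc, add_zero, add_comm]

end

/-- For every edit script `δ̄` with `δ̄(x̄) = ȳ` there exists an inverse
edit script `δ̄⁻¹` of the same length with `δ̄⁻¹(ȳ) = x̄`; moreover, if the cost function
`c` is symmetric, then `c(δ̄⁻¹, ȳ) = c(δ̄, x̄)`. -/
theorem exists_inverse_script {α : Type} (x y : PTree α) (δ : List (Edit α))
    (h : applyScript δ [x] = [y]) :
    ∃ δinv : List (Edit α),
      δinv.length = δ.length ∧
      applyScript δinv [y] = [x] ∧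
      ∀ c : Cost α, Symm c → scriptCost c δinv [y] = scriptCost c δ [x] := by
  obtain ⟨δinv, hlen, happly, hcost⟩ := exists_inverse_script_forest δ [x]
  rw [h] at happly hcost
  exact ⟨δinv, hlen, happly, hcost⟩

end TED
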